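/- arXiv:2604.19986 — 2 statements merged into one kernel-verified Lean document; each statement's English description precedes it below -/
import Mathlib

section
/- Let D be a finite subset of ℝⁿ and let v be an element of D − D of maximal Euclidean norm, with v ≠ 0. Then |D ∩ (D + v)| ≤ 1. Equivalently, there do not exist u₁, u₂, u₃, u₄ ∈ D with (u₁, u₃) distinct pairs, u₁ + v = u₂ and u₃ + v = u₄ with {u₁,u₂} ≠ {u₃,u₄}. -/
open Pointwise

theorem stmt_9 (n : ℕ) (D : Set (EuclideanSpace ℝ (Fin n))) (hD : D.Finite)
    (hDne : D.Nonempty) (v : EuclideanSpace ℝ (Fin n)) (hv : v ∈ D - D) (hv0 : v ≠ 0)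
    (hmax : ∀ w ∈ D - D, ‖w‖ ≤ ‖v‖) :
    (D ∩ ((· + v) '' D)).Subsingleton := by
  rintro x ⟨hxD, u1, hu1, rfl⟩ y ⟨hyD, u3, hu3, rfl⟩
  by_contra hne
  have ha : u3 - u1 ≠ 0 := by
    intro h
    apply hne
    have : u3 = u1 := by
      have := sub_eq_zero.mp h
      exact this
    simp [this]
  set a := u3 - u1 with ha_def
  have h1 : a + v = (u3 + v) - u1 := by rw [ha_def]; abel
  have h2 : a - v = u3 - (u1 + v) := by rw [ha_def]; abel
  have m1 : a + v ∈ D - D := by rw [h1]; exact Set.sub_mem_sub hyD hu1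
  have m2 : a - v ∈ D - D := by rw [h2]; exact Set.sub_mem_sub hu3 hxD
  have n1 : ‖a + v‖ ≤ ‖v‖ := hmax _ m1
  have n2 : ‖a - v‖ ≤ ‖v‖ := hmax _ m2
  have hpar := parallelogram_law_with_norm ℝ a v
  have hapos : 0 < ‖a‖ := norm_pos_iff.mpr ha
  nlinarith [norm_nonneg (a + v), norm_nonneg (a - v), norm_nonneg v]
end

section
/- Let A be an expanding n×n real matrix (all eigenvalues have modulus > 1), D ⊆ ℝⁿ finite, and let π(d_j) = ∑_{j=1}^{∞} A^{−j} d_j for digit sequences (d_j) ∈ Dᴺ, with T = π(Dᴺ). For α ∈ π((D−D)ᴺ), T ∩ (T + α) = ⋃ over all (D−D)-representations (α_j) of α of π(∏_{j=1}^{∞} (D ∩ (D + α_j))), i.e., x ∈ T ∩ (T + α) if and only if there exists a sequence (α_j) ∈ (D−D)ᴺ with ∑ A^{−j} α_j = α and a sequence (x_j) with x_j ∈ D ∩ (D + α_j) for all j and x = ∑ A^{−j} x_j. -/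
open Pointwise Matrix Filter

lemma euclid_coord_le {n : ℕ} (x : EuclideanSpace ℝ (Fin n)) (i : Fin n) : |x i| ≤ ‖x‖ := by
  rw [EuclideanSpace.norm_eq]
  have h1 : |x i| = Real.sqrt (‖x i‖ ^ 2) := by
    rw [Real.sqrt_sq_eq_abs]; simp [abs_abs]
  rw [h1]
  apply Real.sqrt_le_sqrt
  exact Finset.single_le_sum (f := fun i => ‖x i‖ ^ 2) (fun _ _ => sq_nonneg _) (Finset.mem_univ i)

section
attribute [local instance] Matrix.linftyOpNormedRing Matrix.linftyOpNormedAlgebra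
  Matrix.linftyOpNormedAddCommGroup

lemma nnnorm_map_complex {n : ℕ} (M : Matrix (Fin n) (Fin n) ℝ) :
    ‖M.map (algebraMap ℝ ℂ)‖₊ = ‖M‖₊ := by
  rw [Matrix.linfty_opNNNorm_def, Matrix.linfty_opNNNorm_def]
  refine Finset.sup_congr rfl fun i _ => ?_
  refine Finset.sum_congr rfl fun j _ => ?_
  simp [Matrix.map_apply, Complex.nnnorm_real]

lemma mat_entry_le {n : ℕ} (M : Matrix (Fin n) (Fin n) ℝ) (i j : Fin n) : |M i j| ≤ ‖M‖ := by
  have h : ‖M i j‖₊ ≤ ‖M‖₊ := by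
    rw [Matrix.linfty_opNNNorm_def]
    refine le_trans ?_ (Finset.le_sup (Finset.mem_univ i))
    exact Finset.single_le_sum (f := fun j => ‖M i j‖₊) (fun _ _ => zero_le) (Finset.mem_univ j)
  have := NNReal.coe_le_coe.mpr h
  simpa [Real.norm_eq_abs] using this

lemma geom_bound {n : ℕ} (hn : 0 < n) (A : Matrix (Fin n) (Fin n) ℝ)
    (hA : ∀ μ ∈ spectrum ℂ (A.map (algebraMap ℝ ℂ)), 1 < ‖μ‖) :
    ∃ r : NNReal, r < 1 ∧ ∀ᶠ k in atTop, ‖(A⁻¹ ^ k : Matrix (Fin n) (Fin n) ℝ)‖₊ ≤ r ^ k := by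
  haveI : Nonempty (Fin n) := ⟨⟨0, hn⟩⟩
  haveI : CompleteSpace (Matrix (Fin n) (Fin n) ℂ) :=
    inferInstance
  haveI : Nontrivial (Matrix (Fin n) (Fin n) ℂ) := inferInstance
  set Ac := A.map (algebraMap ℝ ℂ) with hAc
  have hunit : IsUnit Ac := by
    by_contra h
    have h0 : (0 : ℂ) ∈ spectrum ℂ Ac := (spectrum.zero_mem_iff ℂ).mpr h
    have := hA 0 h0
    norm_num at this
  have hdet : IsUnit A.det := by
    have h1 : IsUnit Ac.det := (Matrix.isUnit_iff_isUnit_det Ac).mp hunit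
    have h2 : Ac.det = algebraMap ℝ ℂ A.det := by
      rw [hAc, ← RingHom.mapMatrix_apply, ← RingHom.map_det]
    rw [h2] at h1
    have : (A.det : ℝ) ≠ 0 := by
      intro h
      rw [h, map_zero] at h1
      exact not_isUnit_zero h1
    exact this.isUnit
  set Bc := (A⁻¹).map (algebraMap ℝ ℂ) with hBc
  have hAB : Ac * Bc = 1 := by
    rw [hAc, hBc, ← Matrix.map_mul, Matrix.mul_nonsing_inv A hdet,
      Matrix.map_one _ (map_zero _) (map_one _)]
  have hBA : Bc * Ac = 1 := by
    rw [hAc, hBc, ← Matrix.map_mul, Matrix.nonsing_inv_mul A hdet,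
      Matrix.map_one _ (map_zero _) (map_one _)]
  set u : (Matrix (Fin n) (Fin n) ℂ)ˣ := ⟨Ac, Bc, hAB, hBA⟩ with hu
  have hspec : ∀ μ ∈ spectrum ℂ Bc, ‖μ‖₊ < 1 := by
    intro μ hμ
    rcases eq_or_ne μ 0 with rfl | hμ0
    · simp
    · have hmem : μ⁻¹ ∈ spectrum ℂ (u : Matrix (Fin n) (Fin n) ℂ) := by
        have : μ ∈ spectrum ℂ ((u⁻¹ : (Matrix (Fin n) (Fin n) ℂ)ˣ) : Matrix (Fin n) (Fin n) ℂ) := hμ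
        exact spectrum.inv₀_mem_iff.mpr this
      have h1 : 1 < ‖μ⁻¹‖ := hA _ hmem
      rw [norm_inv] at h1
      have hpos : 0 < ‖μ‖ := norm_pos_iff.mpr hμ0
      have : ‖μ‖ < 1 := (one_lt_inv₀ hpos).mp h1
      rw [← NNReal.coe_lt_coe]
      simpa using this
  have hrad : spectralRadius ℂ Bc < 1 := by
    have := spectrum.spectralRadius_lt_of_forall_lt (a := Bc) (r := 1) hspec
    simpa using this
  obtain ⟨r, hρr, hr1⟩ := ENNReal.lt_iff_exists_nnreal_btwn.mp hrad
  refine ⟨r, by exact_mod_cast hr1, ?_⟩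
  have hgel := spectrum.pow_nnnorm_pow_one_div_tendsto_nhds_spectralRadius Bc
  have hev : ∀ᶠ k : ℕ in atTop, (‖Bc ^ k‖₊ : ENNReal) ^ (1 / (k : ℝ)) < r :=
    hgel.eventually_lt_const hρr
  filter_upwards [hev, eventually_ge_atTop 1] with k hk hk1
  have hkne : (k : ℝ) ≠ 0 := by positivity
  have h2 : ((‖Bc ^ k‖₊ : ENNReal) ^ (1 / (k : ℝ))) ^ (k : ℝ) < (r : ENNReal) ^ (k : ℝ) :=
    ENNReal.rpow_lt_rpow hk (by positivity)
  rw [← ENNReal.rpow_mul, one_div, inv_mul_cancel₀ hkne, ENNReal.rpow_one] at h2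
  have h3 : (‖Bc ^ k‖₊ : ENNReal) < ((r ^ k : NNReal) : ENNReal) := by
    rw [ENNReal.coe_pow]
    rwa [← ENNReal.rpow_natCast (r : ENNReal) k]
  have h4 : ‖Bc ^ k‖₊ < r ^ k := by exact_mod_cast h3
  have h5 : Bc ^ k = ((A⁻¹ ^ k : Matrix (Fin n) (Fin n) ℝ)).map (algebraMap ℝ ℂ) := by
    rw [hBc]
    exact (map_pow ((algebraMap ℝ ℂ).mapMatrix) A⁻¹ k).symm
  rw [h5, nnnorm_map_complex] at h4
  exact h4.le

lemma geom_bound_entry {n : ℕ} (hn : 0 < n) (A : Matrix (Fin n) (Fin n) ℝ)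
    (hA : ∀ μ ∈ spectrum ℂ (A.map (algebraMap ℝ ℂ)), 1 < ‖μ‖) :
    ∃ r : ℝ, 0 ≤ r ∧ r < 1 ∧ ∀ᶠ k in atTop,
      ∀ i j : Fin n, |(A⁻¹ ^ k : Matrix (Fin n) (Fin n) ℝ) i j| ≤ r ^ k := by
  obtain ⟨r, hr1, hev⟩ := geom_bound hn A hA
  refine ⟨r, r.coe_nonneg, by exact_mod_cast hr1, ?_⟩
  filter_upwards [hev] with k hk i j
  refine (mat_entry_le _ i j).trans ?_
  have := NNReal.coe_le_coe.mpr hk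
  simpa using this

end

lemma summable_aux {n : ℕ} (A : Matrix (Fin n) (Fin n) ℝ)
    (hA : ∀ μ ∈ spectrum ℂ (A.map (algebraMap ℝ ℂ)), 1 < ‖μ‖)
    (C : ℝ) (hC0 : 0 ≤ C) (d : ℕ → EuclideanSpace ℝ (Fin n)) (hd : ∀ j, ‖d j‖ ≤ C) :
    Summable (fun j : ℕ => (WithLp.toLp 2 ((A⁻¹ ^ (j + 1)).mulVec (d j)) : EuclideanSpace ℝ (Fin n))) := by
  rcases Nat.eq_zero_or_pos n with rfl | hn
  · have : (fun j : ℕ => (WithLp.toLp 2 ((A⁻¹ ^ (j + 1)).mulVec (d j)) : EuclideanSpace ℝ (Fin 0)))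
        = fun _ => 0 := funext fun j => Subsingleton.elim _ _
    rw [this]
    exact summable_zero
  · obtain ⟨r, hr0, hr1, hev⟩ := geom_bound_entry hn A hA
    have hev' : ∀ᶠ j : ℕ in atTop,
        ∀ i l : Fin n, |(A⁻¹ ^ (j + 1) : Matrix (Fin n) (Fin n) ℝ) i l| ≤ r ^ (j + 1) :=
      (tendsto_add_atTop_nat 1).eventually hev
    apply Summable.of_norm_bounded_eventually_nat
      (g := fun j => ((n : ℝ) * n * C * r) * r ^ j)
      ((summable_geometric_of_lt_one hr0 hr1).mul_left _)
    filter_upwards [hev'] with j hj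
    set M := (A⁻¹ ^ (j + 1) : Matrix (Fin n) (Fin n) ℝ) with hM
    have hentry : ∀ i : Fin n, ‖(M.mulVec (d j)) i‖ ≤ (n : ℝ) * r ^ (j + 1) * C := by
      intro i
      rw [Real.norm_eq_abs]
      calc |(M.mulVec (d j)) i| = |∑ l, M i l * d j l| := rfl
        _ ≤ ∑ l, |M i l * d j l| := Finset.abs_sum_le_sum_abs _ _
        _ ≤ ∑ _l : Fin n, r ^ (j + 1) * C := by
            apply Finset.sum_le_sum
            intro l _
            rw [abs_mul]
            exact mul_le_mul (hj i l)
              ((euclid_coord_le (d j) l).trans (hd j)) (abs_nonneg _) (by positivity)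
        _ = n * r ^ (j + 1) * C := by
            rw [Finset.sum_const, Finset.card_univ, Fintype.card_fin, nsmul_eq_mul]; ring
    have h1 : ‖(WithLp.toLp 2 (M.mulVec (d j)) : EuclideanSpace ℝ (Fin n))‖
        ≤ (n : ℝ) * ((n : ℝ) * r ^ (j + 1) * C) := by
      have heq : (WithLp.toLp 2 (M.mulVec (d j)) : EuclideanSpace ℝ (Fin n))
          = ∑ i, EuclideanSpace.single i ((M.mulVec (d j)) i) := by
        ext i; simp [EuclideanSpace.single_apply]
      rw [heq]
      calc _ ≤ ∑ i, ‖EuclideanSpace.single i ((M.mulVec (d j)) i)‖ := norm_sum_le _ _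
        _ ≤ ∑ _i : Fin n, (n : ℝ) * r ^ (j + 1) * C :=
            Finset.sum_le_sum fun i _ => by rw [EuclideanSpace.norm_single]; exact hentry i
        _ = _ := by rw [Finset.sum_const, Finset.card_univ, Fintype.card_fin, nsmul_eq_mul]
    exact h1.trans (le_of_eq (by ring))

theorem stmt_19 (n : ℕ) (A : Matrix (Fin n) (Fin n) ℝ)
    (hA : ∀ μ ∈ spectrum ℂ (A.map (algebraMap ℝ ℂ)), 1 < ‖μ‖)
    (D : Set (EuclideanSpace ℝ (Fin n))) (hD : D.Finite)
    (T : Set (EuclideanSpace ℝ (Fin n)))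
    (hT : T = {x | ∃ d : ℕ → EuclideanSpace ℝ (Fin n), (∀ j, d j ∈ D) ∧
      x = ∑' j : ℕ, (WithLp.toLp 2 ((A⁻¹ ^ (j + 1)).mulVec (d j)) : EuclideanSpace ℝ (Fin n))})
    (α : EuclideanSpace ℝ (Fin n))
    (hα : ∃ a : ℕ → EuclideanSpace ℝ (Fin n), (∀ j, a j ∈ D - D) ∧
      α = ∑' j : ℕ, (WithLp.toLp 2 ((A⁻¹ ^ (j + 1)).mulVec (a j)) : EuclideanSpace ℝ (Fin n))) :
    ∀ x : EuclideanSpace ℝ (Fin n),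
      x ∈ T ∩ ((· + α) '' T) ↔
      ∃ (a : ℕ → EuclideanSpace ℝ (Fin n)) (d : ℕ → EuclideanSpace ℝ (Fin n)),
        (∀ j, a j ∈ D - D) ∧
        α = ∑' j : ℕ, (WithLp.toLp 2 ((A⁻¹ ^ (j + 1)).mulVec (a j)) : EuclideanSpace ℝ (Fin n)) ∧
        (∀ j, d j ∈ D ∩ ((· + a j) '' D)) ∧
        x = ∑' j : ℕ, (WithLp.toLp 2 ((A⁻¹ ^ (j + 1)).mulVec (d j)) : EuclideanSpace ℝ (Fin n)) := by
  -- a bound on D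
  obtain ⟨C, hC0, hC⟩ : ∃ C : ℝ, 0 ≤ C ∧ ∀ v ∈ D, ‖v‖ ≤ C := by
    obtain ⟨C0, hC0⟩ := (hD.image (fun v => ‖v‖)).bddAbove
    refine ⟨max C0 0, le_max_right _ _, fun v hv => ?_⟩
    exact le_trans (hC0 ⟨v, hv, rfl⟩) (le_max_left _ _)
  intro x
  constructor
  · rintro ⟨hx1, y, hy, rfl⟩
    rw [hT] at hx1 hy
    obtain ⟨d, hd, hxd⟩ := hx1
    obtain ⟨e, he, hye⟩ := hy
    have hsd : Summable (fun j : ℕ => (WithLp.toLp 2 ((A⁻¹ ^ (j + 1)).mulVec (d j)) : EuclideanSpace ℝ (Fin n))) :=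
      summable_aux A hA C hC0 d (fun j => hC _ (hd j))
    have hse : Summable (fun j : ℕ => (WithLp.toLp 2 ((A⁻¹ ^ (j + 1)).mulVec (e j)) : EuclideanSpace ℝ (Fin n))) :=
      summable_aux A hA C hC0 e (fun j => hC _ (he j))
    refine ⟨fun j => d j - e j, d, fun j => Set.sub_mem_sub (hd j) (he j), ?_,
      fun j => ⟨hd j, ⟨e j, he j, by simp⟩⟩, hxd⟩
    have h0 : α = (y + α) - y := by abel
    calc α = (y + α) - y := h0
      _ = (∑' j : ℕ, (WithLp.toLp 2 ((A⁻¹ ^ (j + 1)).mulVec (d j)) : EuclideanSpace ℝ (Fin n)))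
          - (∑' j : ℕ, (WithLp.toLp 2 ((A⁻¹ ^ (j + 1)).mulVec (e j)) : EuclideanSpace ℝ (Fin n))) := by
            rw [← hxd, ← hye]
      _ = ∑' j : ℕ, ((WithLp.toLp 2 ((A⁻¹ ^ (j + 1)).mulVec (d j)) : EuclideanSpace ℝ (Fin n))
          - (WithLp.toLp 2 ((A⁻¹ ^ (j + 1)).mulVec (e j)) : EuclideanSpace ℝ (Fin n))) :=
            (Summable.tsum_sub hsd hse).symm
      _ = ∑' j : ℕ, (WithLp.toLp 2 ((A⁻¹ ^ (j + 1)).mulVec (d j - e j)) : EuclideanSpace ℝ (Fin n)) :=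
            tsum_congr fun j => by rw [Matrix.mulVec_sub, WithLp.toLp_sub]
  · rintro ⟨a, d, ha, hαa, hdm, hx⟩
    choose e he1 he2 using fun j => (hdm j).2
    have haj : ∀ j, a j = d j - e j := fun j => eq_sub_of_add_eq' (he2 j)
    have hsd : Summable (fun j : ℕ => (WithLp.toLp 2 ((A⁻¹ ^ (j + 1)).mulVec (d j)) : EuclideanSpace ℝ (Fin n))) :=
      summable_aux A hA C hC0 d (fun j => hC _ (hdm j).1)
    have hse : Summable (fun j : ℕ => (WithLp.toLp 2 ((A⁻¹ ^ (j + 1)).mulVec (e j)) : EuclideanSpace ℝ (Fin n))) :=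
      summable_aux A hA C hC0 e (fun j => hC _ (he1 j))
    have hsa : Summable (fun j : ℕ => (WithLp.toLp 2 ((A⁻¹ ^ (j + 1)).mulVec (a j)) : EuclideanSpace ℝ (Fin n))) := by
      have heq : (fun j : ℕ => (WithLp.toLp 2 ((A⁻¹ ^ (j + 1)).mulVec (a j)) : EuclideanSpace ℝ (Fin n)))
          = fun j : ℕ => ((WithLp.toLp 2 ((A⁻¹ ^ (j + 1)).mulVec (d j)) : EuclideanSpace ℝ (Fin n))
            - (WithLp.toLp 2 ((A⁻¹ ^ (j + 1)).mulVec (e j)) : EuclideanSpace ℝ (Fin n))) := by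
        funext j
        rw [haj j, WithLp.ofLp_sub, Matrix.mulVec_sub, WithLp.toLp_sub]
      rw [heq]
      exact hsd.sub hse
    constructor
    · rw [hT]
      exact ⟨d, fun j => (hdm j).1, hx⟩
    · refine ⟨∑' j : ℕ, (WithLp.toLp 2 ((A⁻¹ ^ (j + 1)).mulVec (e j)) : EuclideanSpace ℝ (Fin n)), ?_, ?_⟩
      · rw [hT]
        exact ⟨e, he1, rfl⟩
      · rw [hαa, hx]
        calc (∑' j : ℕ, (WithLp.toLp 2 ((A⁻¹ ^ (j + 1)).mulVec (e j)) : EuclideanSpace ℝ (Fin n)))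
            + (∑' j : ℕ, (WithLp.toLp 2 ((A⁻¹ ^ (j + 1)).mulVec (a j)) : EuclideanSpace ℝ (Fin n)))
            = ∑' j : ℕ, ((WithLp.toLp 2 ((A⁻¹ ^ (j + 1)).mulVec (e j)) : EuclideanSpace ℝ (Fin n))
              + (WithLp.toLp 2 ((A⁻¹ ^ (j + 1)).mulVec (a j)) : EuclideanSpace ℝ (Fin n))) :=
              (Summable.tsum_add hse hsa).symm
          _ = ∑' j : ℕ, (WithLp.toLp 2 ((A⁻¹ ^ (j + 1)).mulVec (d j)) : EuclideanSpace ℝ (Fin n)) := by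
              refine tsum_congr fun j => ?_
              rw [← WithLp.toLp_add, ← Matrix.mulVec_add, ← WithLp.ofLp_add, show e j + a j = d j from he2 j]
end
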